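/- arXiv:1212.2774 — 4 statements merged into one kernel-verified Lean document; each statement's English description precedes it below -/
import Mathlib

section
/- The time evolution T_∞ (equivalently T_l for l ≥ k) applied to a state consisting of a single block of k consecutive balls (a soliton of length k) followed by at least k empty boxes moves the block exactly k steps to the right. -/
/-- The type `A^{(1)}_1` combinatorial R-matrix on pairs:
`Rm (a,b) (c,d) = ((c',d'),(a',b'))`. -/
def Rm (x y : ℤ × ℤ) : (ℤ × ℤ) × (ℤ × ℤ) :=
  ((y.1 - min x.2 y.1 + min x.1 y.2, y.2 + min x.2 y.1 - min x.1 y.2),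
   (x.1 + min x.2 y.1 - min x.1 y.2, x.2 - min x.2 y.1 + min x.1 y.2))

/-- Membership in the crystal `B^{1,s}`. -/
def inB (s : ℤ) (x : ℤ × ℤ) : Prop := 0 ≤ x.1 ∧ 0 ≤ x.2 ∧ x.1 + x.2 = s

/-- Pass the carrier `u` through the state, applying the combinatorial R-matrix
at each box; returns the new state together with the final carrier. -/
def pass (u : ℤ × ℤ) : List (ℤ × ℤ) → List (ℤ × ℤ) × (ℤ × ℤ)
  | [] => ([], u)
  | x :: xs =>
      let r := Rm u x
      let p := pass r.2 xs
      (r.1 :: p.1, p.2)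

/-- The box-ball time evolution `T_l`, using the carrier `u_l = (l,0)`. -/
def Tl (l : ℤ) (b : List (ℤ × ℤ)) : List (ℤ × ℤ) := (pass (l, 0) b).1

/-- A ball. -/
def ball : ℤ × ℤ := (0, 1)

/-- An empty box. -/
def emptyBox : ℤ × ℤ := (1, 0)

lemma pass_nil (u : ℤ × ℤ) : pass u [] = ([], u) := rfl

lemma pass_cons (u x : ℤ × ℤ) (xs : List (ℤ × ℤ)) :
    pass u (x :: xs) = ((Rm u x).1 :: (pass (Rm u x).2 xs).1, (pass (Rm u x).2 xs).2) := rfl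

lemma pass_append (u : ℤ × ℤ) (xs ys : List (ℤ × ℤ)) :
    pass u (xs ++ ys) =
      ((pass u xs).1 ++ (pass (pass u xs).2 ys).1, (pass (pass u xs).2 ys).2) := by
  induction xs generalizing u with
  | nil => simp [pass_nil]
  | cons x xs ih => simp [pass_cons, ih]

lemma pass_balls (k : ℕ) (a b : ℤ) (ha : (k : ℤ) ≤ a) (hb : 0 ≤ b) :
    pass (a, b) (List.replicate k ball) =
      (List.replicate k emptyBox, (a - k, b + k)) := by
  induction k generalizing a b with
  | zero => simp [pass_nil]
  | succ n ih =>
    have h1 : (1 : ℤ) ≤ a := by push_cast at ha; omega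
    rw [List.replicate_succ, pass_cons]
    have hR : Rm (a, b) ball = (emptyBox, (a - 1, b + 1)) := by
      simp only [Rm, ball, emptyBox]
      have hmb : min b 0 = 0 := by omega
      have hma : min a 1 = 1 := by omega
      rw [hmb, hma]
      norm_num
    rw [hR]
    simp only
    rw [ih (a - 1) (b + 1) (by push_cast at ha ⊢; omega) (by omega)]
    simp only [List.replicate_succ, Prod.mk.injEq]
    push_cast
    exact ⟨trivial, by ring, by ring⟩

lemma pass_empties (n : ℕ) (a b : ℤ) (ha : 0 ≤ a) (hb : (n : ℤ) ≤ b) :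
    pass (a, b) (List.replicate n emptyBox) =
      (List.replicate n ball, (a + n, b - n)) := by
  induction n generalizing a b with
  | zero => simp [pass_nil]
  | succ n ih =>
    rw [List.replicate_succ, pass_cons]
    have hR : Rm (a, b) emptyBox = (ball, (a + 1, b - 1)) := by
      simp only [Rm, ball, emptyBox]
      have hmb : min b 1 = 1 := by push_cast at hb; omega
      have hma : min a 0 = 0 := by omega
      rw [hmb, hma]
      norm_num
    rw [hR]
    simp only
    rw [ih (a + 1) (b - 1) (by omega) (by push_cast at hb ⊢; omega)]
    simp only [List.replicate_succ, Prod.mk.injEq]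
    push_cast
    exact ⟨trivial, by ring, by ring⟩

lemma pass_empties_zero (n : ℕ) (a : ℤ) (ha : 0 ≤ a) :
    pass (a, 0) (List.replicate n emptyBox) =
      (List.replicate n emptyBox, (a, 0)) := by
  induction n with
  | zero => simp [pass_nil]
  | succ n ih =>
    rw [List.replicate_succ, pass_cons]
    have hR : Rm (a, 0) emptyBox = (emptyBox, (a, 0)) := by
      simp only [Rm, emptyBox]
      have hma : min a 0 = 0 := by omega
      rw [hma]
      norm_num
    rw [hR]
    simp only
    rw [ih]

/-- `T_l` with `l ≥ k` moves a soliton of length `k` (a single block of `k`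
consecutive balls, followed by at least `k` empty boxes) exactly `k` steps
to the right. -/
theorem Tl_moves_soliton_k_steps (l : ℤ) (k m : ℕ) (hk : 1 ≤ k)
    (hlk : (k : ℤ) ≤ l) (hm : k ≤ m) :
    Tl l (List.replicate k ball ++ List.replicate m emptyBox) =
      List.replicate k emptyBox ++ List.replicate k ball ++
        List.replicate (m - k) emptyBox := by
  have hsplit : List.replicate m emptyBox =
      List.replicate k emptyBox ++ List.replicate (m - k) emptyBox := by
    rw [← List.replicate_add]; congr 1; omega
  rw [hsplit, Tl, pass_append, pass_balls k l 0 hlk le_rfl]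
  simp only
  rw [pass_append, show ((0:ℤ) + (k:ℤ)) = (k:ℤ) by ring,
    pass_empties k (l - k) k (by omega) le_rfl]
  simp only
  rw [show l - (k:ℤ) + k = l by ring, show ((k:ℤ) - k) = 0 by ring,
    pass_empties_zero (m - k) l (by omega)]
  simp [List.append_assoc]
end

section
/- The box-ball time evolutions commute: for all l, k ≥ 1 and any state b (with sufficiently many trailing empty boxes), T_l(T_k(b)) = T_k(T_l(b)). -/
/-! `T_k` is the first component of passing the carrier `u_k = (k, 0)` through the state. By the
Yang–Baxter relation at each box, passing a carrier `u` and then a carrier `v` through the state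
gives the same state as passing the two factors of `R(u ⊗ v)` in turn, with the final carriers
again related by `R`. Since `R(u_k ⊗ u_l) = u_l ⊗ u_k`, the two orders of evolution agree. -/

lemma eq_emptyBox_or_eq_ball_of_inB_one {x : ℤ × ℤ} (hx : inB 1 x) : x = emptyBox ∨ x = ball := by
  obtain ⟨a, b⟩ := x
  simp only [inB, emptyBox, ball, Prod.mk.injEq] at *
  omega

lemma inB.nonneg {s : ℤ} {x : ℤ × ℤ} (hx : inB s x) : 0 ≤ x := ⟨hx.1, hx.2.1⟩

lemma Rm_nonneg {x y : ℤ × ℤ} (hx : 0 ≤ x) (hy : 0 ≤ y) :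
    0 ≤ (Rm x y).1 ∧ 0 ≤ (Rm x y).2 := by
  obtain ⟨a, b⟩ := x; obtain ⟨c, d⟩ := y
  simp only [Prod.le_def, Rm, Prod.fst_zero, Prod.snd_zero] at *
  omega

lemma inB_Rm_fst {s : ℤ} {u x : ℤ × ℤ} (hu : 0 ≤ u) (hx : inB s x) : inB s (Rm u x).1 := by
  obtain ⟨a, b⟩ := u; obtain ⟨e, f⟩ := x
  simp only [Prod.le_def, Prod.fst_zero, Prod.snd_zero, Rm, inB] at *
  omega

/- A carrier holding `b` balls drops one into an empty box if `b ≠ 0`, and picks up a ball if it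
has an empty slot (`a ≠ 0`). -/
lemma Rm_emptyBox {a b : ℤ} (ha : 0 ≤ a) (hb : 0 ≤ b) :
    Rm (a, b) emptyBox = if b = 0 then (emptyBox, (a, b)) else (ball, (a + 1, b - 1)) := by
  split_ifs <;> simp only [Rm, emptyBox, ball, Prod.mk.injEq] <;> omega

lemma Rm_ball {a b : ℤ} (ha : 0 ≤ a) (hb : 0 ≤ b) :
    Rm (a, b) ball = if a = 0 then (ball, (a, b)) else (emptyBox, (a - 1, b + 1)) := by
  split_ifs <;> simp only [Rm, emptyBox, ball, Prod.mk.injEq] <;> omega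

/- The Yang–Baxter relation on `B^{1,s} ⊗ B^{1,t} ⊗ B^{1,1}`, in the form in which the carriers
`u, v` cross the box `x`. -/
lemma Rm_yangBaxter {u v x : ℤ × ℤ} (hu : 0 ≤ u) (hv : 0 ≤ v) (hx : inB 1 x) :
    (Rm (Rm u v).2 (Rm (Rm u v).1 x).1).1 = (Rm v (Rm u x).1).1 ∧
    Rm (Rm u x).2 (Rm v (Rm u x).1).2 =
      ((Rm (Rm u v).1 x).2, (Rm (Rm u v).2 (Rm (Rm u v).1 x).1).2) := by
  obtain ⟨hv', hu'⟩ := Rm_nonneg hu hv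
  obtain ⟨a, b⟩ := u; obtain ⟨c, d⟩ := v
  generalize hR : Rm (a, b) (c, d) = R at *
  obtain ⟨⟨c', d'⟩, ⟨a', b'⟩⟩ := R
  simp only [Prod.le_def, Prod.fst_zero, Prod.snd_zero] at hu hv hu' hv'
  -- Once `x` and the boxes the carriers leave behind are fixed, only the min-formulas of
  -- `R(u ⊗ v)` and of the R-matrix of the two outgoing carriers remain, for `omega` to compare.
  rcases eq_emptyBox_or_eq_ball_of_inB_one hx with rfl | rfl <;>
  · simp (disch := omega) only [Rm_emptyBox, Rm_ball]
    split_ifs <;> simp (disch := omega) only [Rm_emptyBox, Rm_ball] <;> split_ifs <;>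
      simp only [Rm, emptyBox, ball, Prod.mk.injEq, true_and] at hR ⊢ <;> omega

lemma pass_yangBaxter {u v : ℤ × ℤ} (hu : 0 ≤ u) (hv : 0 ≤ v) {xs : List (ℤ × ℤ)}
    (hxs : ∀ x ∈ xs, inB 1 x) :
    (pass (Rm u v).2 (pass (Rm u v).1 xs).1).1 = (pass v (pass u xs).1).1 ∧
    Rm (pass u xs).2 (pass v (pass u xs).1).2 =
      ((pass (Rm u v).1 xs).2, (pass (Rm u v).2 (pass (Rm u v).1 xs).1).2) := by
  induction xs generalizing u v with
  | nil => simp [_root_.pass]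
  | cons x xs ih =>
    have hx : inB 1 x := hxs x List.mem_cons_self
    obtain ⟨-, hu₁⟩ := Rm_nonneg hu hx.nonneg
    obtain ⟨-, hv₁⟩ := Rm_nonneg hv (inB_Rm_fst hu hx).nonneg
    obtain ⟨hbox, hcarriers⟩ := Rm_yangBaxter hu hv hx
    obtain ⟨ih₁, ih₂⟩ := ih hu₁ hv₁ fun y hy => hxs y (List.mem_cons_of_mem _ hy)
    simp only [_root_.pass]
    exact ⟨by rw [List.cons.injEq, ← ih₁, hcarriers]; exact ⟨hbox, rfl⟩, by rw [ih₂, hcarriers]⟩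

lemma Rm_mk_zero_mk_zero {k l : ℤ} (hk : 0 ≤ k) (hl : 0 ≤ l) :
    Rm (k, 0) (l, 0) = ((l, 0), (k, 0)) := by
  simp only [Rm, Prod.mk.injEq]
  omega

lemma Tl_comm {k l : ℤ} (hk : 0 ≤ k) (hl : 0 ≤ l) {b : List (ℤ × ℤ)} (hb : ∀ x ∈ b, inB 1 x) :
    Tl l (Tl k b) = Tl k (Tl l b) := by
  have h := (pass_yangBaxter (u := (k, 0)) (v := (l, 0)) ⟨hk, le_rfl⟩ ⟨hl, le_rfl⟩ hb).1
  rw [Rm_mk_zero_mk_zero hk hl] at h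
  exact h.symm

/-- The box-ball time evolutions commute: for any state with sufficiently many
trailing empty boxes, `T_l ∘ T_k = T_k ∘ T_l`. -/
theorem Tl_commute (l k : ℤ) (hl : 1 ≤ l) (hk : 1 ≤ k)
    (b : List (ℤ × ℤ)) (hb : ∀ x ∈ b, inB 1 x) :
    ∃ N : ℕ, ∀ n : ℕ, N ≤ n →
      Tl l (Tl k (b ++ List.replicate n emptyBox)) =
        Tl k (Tl l (b ++ List.replicate n emptyBox)) := by
  refine ⟨0, fun n _ => Tl_comm (by omega) (by omega) fun x hx => ?_⟩
  rcases List.mem_append.1 hx with hx | hx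
  · exact hb x hx
  · rw [List.eq_of_mem_replicate hx]
    exact ⟨zero_le_one, le_rfl, rfl⟩
end

section
/- E_1(b) equals the number of maximal consecutive blocks of balls (solitons counted by descents) in the state b; that is, E_1(b) counts the number of indices i such that b_i is empty and b_{i+1} is a ball (with b_0 taken to be empty), equivalently the number of positions where a ball is immediately preceded by an empty box or is the first entry. -/
/-- The energy `E_1` computed along the carrier pass with initial carrier `u`. -/
def energy (u : ℤ × ℤ) : List (ℤ × ℤ) → ℤ
  | [] => 0
  | x :: xs => min u.1 x.2 + energy (Rm u x).2 xs

/-- `E_1(b)` equals the number of maximal consecutive blocks of balls in `b`, i.e.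
the number of positions carrying a ball whose predecessor (taking the 0-th entry
to be an empty box) is an empty box. -/
theorem E1_counts_solitons (b : List (ℤ × ℤ)) (hb : ∀ x ∈ b, inB 1 x) :
    energy (1, 0) b =
      (((emptyBox :: b).zip b).countP
        (fun p => decide (p.1 = emptyBox ∧ p.2 = ball)) : ℤ) := by
  have hcases : ∀ x : ℤ × ℤ, inB 1 x → x = emptyBox ∨ x = ball := by
    rintro ⟨a, c⟩ ⟨h1, h2, h3⟩
    simp only [emptyBox, ball, Prod.mk.injEq]
    omega
  suffices H : ∀ (b : List (ℤ × ℤ)), (∀ x ∈ b, inB 1 x) →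
      ∀ u : ℤ × ℤ, u = emptyBox ∨ u = ball →
      energy u b = (((u :: b).zip b).countP
        (fun p => decide (p.1 = emptyBox ∧ p.2 = ball)) : ℤ) by
    exact H b hb (1, 0) (Or.inl rfl)
  intro b
  induction b with
  | nil => intro _ u _; simp [energy]
  | cons x xs ih =>
    intro hb u hu
    have hx := hcases x (hb x List.mem_cons_self)
    have hxs : ∀ y ∈ xs, inB 1 y := fun y hy => hb y (List.mem_cons_of_mem _ hy)
    have hrec := ih hxs x hx
    rcases hu with hu | hu <;> rcases hx with hx | hx <;>
      subst hu <;> subst hx <;>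
      simp [energy, Rm, emptyBox, ball, List.countP_cons] at hrec ⊢ <;>
      omega
end

section
/- Every rigged configuration (ν, J) produced by the bijection Φ from a path of length L satisfies, for every string (ν_i, J_i), the inequality J_i ≤ P_{ν_i}(L, ν), where P_ℓ(L, ν) = L − 2Q_ℓ(ν) is the vacancy number. -/
/-! Throughout the algorithm keep the invariant that, after the ball at position `k`, every row
has positive length and rigging at most its vacancy number `P_ℓ(k, ν)`. Passing from `k - 1` to
`k` raises every vacancy number by one, while adding a box in column `m + 1` raises `Q_ℓ` by one
exactly for `ℓ > m`; so rows of length `≤ m` gain one and longer rows lose one. Since `m` is the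
length of a longest singular string, the longer rows were non-singular, i.e. strictly below
their vacancy number, and the changed row is made singular. Vacancy numbers grow with the
position, so the invariant at the last ball gives the bound at `L`. -/

/-- `Q_ℓ(ν)`: the number of boxes in the leftmost `ℓ` columns of the configuration,
where a rigged configuration is a list of strings (row length, rigging). -/
def Qcol (ℓ : ℕ) (ν : List (ℕ × ℤ)) : ℕ := (ν.map fun s => min s.1 ℓ).sum

/-- The vacancy number `P_ℓ(k, ν) = k - 2 Q_ℓ(ν)`. -/
def vac (ℓ k : ℕ) (ν : List (ℕ × ℤ)) : ℤ := (k : ℤ) - 2 * (Qcol ℓ ν : ℤ)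

/-- Replace the first element satisfying `p` using `f`. -/
def replaceFirst (p : ℕ × ℤ → Bool) (f : ℕ × ℤ → ℕ × ℤ) : List (ℕ × ℤ) → List (ℕ × ℤ)
  | [] => []
  | x :: xs => if p x then f x :: xs else x :: replaceFirst p f xs

/-- One step of the rigged configuration bijection `Φ`, processing a ball at
position `k`: add a box to a longest singular string (or create a new length-one
row if there is no singular string) and make the changed string singular with
respect to the new vacancy numbers. -/
def phiStep (k : ℕ) (ν : List (ℕ × ℤ)) : List (ℕ × ℤ) :=
  let isSing : ℕ × ℤ → Bool := fun s => decide (s.2 = vac s.1 (k - 1) ν)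
  let sing := ν.filter isSing
  if sing.isEmpty then
    ν ++ [(1, vac 1 k (ν ++ [(1, 0)]))]
  else
    let m := (sing.map Prod.fst).foldr max 0
    let p : ℕ × ℤ → Bool := fun s => isSing s && decide (s.1 = m)
    let shape := replaceFirst p (fun s => (s.1 + 1, s.2)) ν
    replaceFirst p (fun s => (s.1 + 1, vac (m + 1) k shape)) ν

/-- The rigged configuration bijection `Φ`, applied to the (increasing) list of
ball positions of a path in `(B^{1,1})^{⊗ L}`. -/
def Phi (ks : List ℕ) : List (ℕ × ℤ) := ks.foldl (fun ν k => phiStep k ν) []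

lemma Qcol_cons (ℓ : ℕ) (x : ℕ × ℤ) (l : List (ℕ × ℤ)) :
    Qcol ℓ (x :: l) = min x.1 ℓ + Qcol ℓ l := by
  simp [Qcol]

lemma Qcol_append_singleton (ℓ : ℕ) (l : List (ℕ × ℤ)) (x : ℕ × ℤ) :
    Qcol ℓ (l ++ [x]) = Qcol ℓ l + min x.1 ℓ := by
  simp [Qcol]

lemma mem_replaceFirst {p : ℕ × ℤ → Bool} {f : ℕ × ℤ → ℕ × ℤ} {l : List (ℕ × ℤ)}
    {s : ℕ × ℤ} (hs : s ∈ replaceFirst p f l) : s ∈ l ∨ ∃ a ∈ l, p a ∧ s = f a := by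
  induction l with
  | nil => simp [replaceFirst] at hs
  | cons x xs ih =>
    unfold replaceFirst at hs
    split_ifs at hs with hx
    · rcases List.mem_cons.mp hs with rfl | hs
      · exact .inr ⟨x, List.mem_cons_self, hx, rfl⟩
      · exact .inl (List.mem_cons_of_mem _ hs)
    · rcases List.mem_cons.mp hs with rfl | hs
      · exact .inl List.mem_cons_self
      · rcases ih hs with hs | ⟨a, ha, hpa, rfl⟩
        · exact .inl (List.mem_cons_of_mem _ hs)
        · exact .inr ⟨a, List.mem_cons_of_mem _ ha, hpa, rfl⟩

lemma Qcol_replaceFirst {m : ℕ} {p : ℕ × ℤ → Bool} {f : ℕ × ℤ → ℕ × ℤ}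
    (hf : ∀ a, (f a).1 = a.1 + 1) (hp : ∀ a, p a → a.1 = m) {l : List (ℕ × ℤ)}
    (hl : ∃ a ∈ l, p a) (ℓ : ℕ) :
    Qcol ℓ (replaceFirst p f l) + min m ℓ = Qcol ℓ l + min (m + 1) ℓ := by
  induction l with
  | nil => simp at hl
  | cons x xs ih =>
    unfold replaceFirst
    split_ifs with hx
    · rw [Qcol_cons, Qcol_cons, hf, hp x hx]
      omega
    · obtain ⟨a, ha, hpa⟩ := hl
      have ha' : a ∈ xs := (List.mem_cons.mp ha).resolve_left (by rintro rfl; exact hx hpa)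
      rw [Qcol_cons, Qcol_cons]
      have := ih ⟨a, ha', hpa⟩
      omega

lemma vac_succ_of_add_box {ℓ k m : ℕ} {ν ν' : List (ℕ × ℤ)}
    (hQ : Qcol ℓ ν' + min m ℓ = Qcol ℓ ν + min (m + 1) ℓ) :
    vac ℓ (k + 1) ν' = vac ℓ k ν + if ℓ ≤ m then 1 else -1 := by
  unfold vac
  split_ifs <;> omega

def IsAdmissible (k : ℕ) (ν : List (ℕ × ℤ)) : Prop :=
  ∀ s ∈ ν, 1 ≤ s.1 ∧ s.2 ≤ vac s.1 k ν

lemma IsAdmissible.mono {k k' : ℕ} {ν : List (ℕ × ℤ)} (h : IsAdmissible k ν) (hk : k ≤ k') :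
    IsAdmissible k' ν := fun s hs =>
  ⟨(h s hs).1, (h s hs).2.trans (by unfold vac; omega)⟩

lemma IsAdmissible.succ_of_add_box {k m : ℕ} {ν ν' : List (ℕ × ℤ)} (h : IsAdmissible k ν)
    (hQ : ∀ ℓ, Qcol ℓ ν' + min m ℓ = Qcol ℓ ν + min (m + 1) ℓ)
    (hlong : ∀ s ∈ ν, m < s.1 → s.2 ≠ vac s.1 k ν)
    (hmem : ∀ s ∈ ν', s ∈ ν ∨ s = (m + 1, vac (m + 1) (k + 1) ν')) :
    IsAdmissible (k + 1) ν' := by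
  intro s hs
  rcases hmem s hs with hs | rfl
  · obtain ⟨hpos, hle⟩ := h s hs
    refine ⟨hpos, ?_⟩
    rw [vac_succ_of_add_box (hQ s.1)]
    split_ifs with hsm
    · omega
    · have := hlong s hs (by omega)
      omega
  · exact ⟨by omega, le_rfl⟩

lemma IsAdmissible.phiStep_succ_of_singular {k : ℕ} {ν : List (ℕ × ℤ)} (h : IsAdmissible k ν)
    {b : ℕ × ℤ} (hb : b ∈ ν) (hbs : b.2 = vac b.1 k ν) :
    IsAdmissible (k + 1) (phiStep (k + 1) ν) := by
  set isSing : ℕ × ℤ → Bool := fun s => decide (s.2 = vac s.1 k ν)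
  set sing := ν.filter isSing
  set m := (sing.map Prod.fst).foldr max 0
  set p : ℕ × ℤ → Bool := fun s => isSing s && decide (s.1 = m)
  set shape := replaceFirst p (fun s => (s.1 + 1, s.2)) ν
  have hsing : sing ≠ [] := List.ne_nil_of_mem (List.mem_filter.2 ⟨hb, by simpa [isSing]⟩)
  have hm : m ∈ sing.map Prod.fst :=
    List.maximum_mem (List.foldr_max_of_ne_nil (l := sing.map Prod.fst) (by simpa using hsing)).symm
  have hle : ∀ s ∈ sing, s.1 ≤ m := fun s hs => List.le_max_of_le (List.mem_map_of_mem hs) le_rfl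
  have hp : ∀ a, p a → a.1 = m := by simp [p]
  have hex : ∃ a ∈ ν, p a := by
    obtain ⟨a, ha, ham⟩ := List.mem_map.1 hm
    obtain ⟨ha, has⟩ := List.mem_filter.1 ha
    exact ⟨a, ha, by simp [p, has, ham]⟩
  have hstep : phiStep (k + 1) ν =
      replaceFirst p (fun s => (s.1 + 1, vac (m + 1) (k + 1) shape)) ν := by
    simp [phiStep, isSing, sing, m, p, shape, hsing]
  rw [hstep]
  set ν' := replaceFirst p (fun s => (s.1 + 1, vac (m + 1) (k + 1) shape)) ν
  have hQ : ∀ ℓ, Qcol ℓ ν' + min m ℓ = Qcol ℓ ν + min (m + 1) ℓ :=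
    Qcol_replaceFirst (fun _ => rfl) hp hex
  have hQshape : ∀ ℓ, Qcol ℓ shape + min m ℓ = Qcol ℓ ν + min (m + 1) ℓ :=
    Qcol_replaceFirst (fun _ => rfl) hp hex
  refine h.succ_of_add_box hQ (fun s hs hms hss => ?_) (fun s hs => ?_)
  · have := hle s (List.mem_filter.2 ⟨hs, by simpa [isSing]⟩)
    omega
  · rcases mem_replaceFirst hs with hs | ⟨a, -, hpa, rfl⟩
    · exact .inl hs
    · refine .inr ?_
      have hshape : Qcol (m + 1) shape = Qcol (m + 1) ν' := by
        have := hQ (m + 1)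
        have := hQshape (m + 1)
        omega
      simp only [hp a hpa, vac, hshape]

lemma IsAdmissible.phiStep_succ {k : ℕ} {ν : List (ℕ × ℤ)} (h : IsAdmissible k ν) :
    IsAdmissible (k + 1) (phiStep (k + 1) ν) := by
  by_cases hsing : ∃ b ∈ ν, b.2 = vac b.1 k ν
  · obtain ⟨b, hb, hbs⟩ := hsing
    exact h.phiStep_succ_of_singular hb hbs
  simp only [not_exists, not_and] at hsing
  have hempty : ν.filter (fun s => decide (s.2 = vac s.1 k ν)) = [] :=
    List.filter_eq_nil_iff.2 (by simpa using hsing)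
  have hstep : phiStep (k + 1) ν = ν ++ [(1, vac 1 (k + 1) (ν ++ [(1, 0)]))] := by
    simp [phiStep, hempty]
  rw [hstep]
  -- a new row counts as adding a box to a row of length `0`
  refine h.succ_of_add_box (m := 0) (fun ℓ => by simp [Qcol_append_singleton])
    (fun s hs _ => hsing s hs) (fun s hs => ?_)
  rcases List.mem_append.1 hs with hs | hs
  · exact .inl hs
  · simp_all [vac, Qcol_append_singleton]

lemma IsAdmissible.foldl_phiStep {j L : ℕ} {ν : List (ℕ × ℤ)} {ks : List ℕ}
    (h : IsAdmissible j ν) (hsort : ks.Pairwise (· < ·)) (hlow : ∀ x ∈ ks, j < x)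
    (hhigh : ∀ x ∈ ks, x ≤ L) (hjL : j ≤ L) :
    IsAdmissible L (ks.foldl (fun ν k => phiStep k ν) ν) := by
  induction ks generalizing j ν with
  | nil => exact h.mono hjL
  | cons k ks ih =>
    obtain ⟨hk, hsort⟩ := List.pairwise_cons.1 hsort
    have hjk := hlow k List.mem_cons_self
    have hstep : IsAdmissible k (phiStep k ν) := by
      obtain ⟨i, rfl⟩ := Nat.exists_eq_add_of_lt hjk
      exact (h.mono (by omega)).phiStep_succ
    exact ih hstep hsort hk (fun x hx => hhigh x (List.mem_cons_of_mem _ hx))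
      (hhigh k List.mem_cons_self)

/-- Every rigged configuration produced by `Φ` from a path of length `L` satisfies
`J_i ≤ P_{ν_i}(L, ν)` for every string `(ν_i, J_i)`. -/
theorem phi_rigging_le_vacancy (L : ℕ) (ks : List ℕ) (hsort : ks.Pairwise (· < ·))
    (hrange : ∀ x ∈ ks, 1 ≤ x ∧ x ≤ L) :
    ∀ s ∈ Phi ks, s.2 ≤ vac s.1 L (Phi ks) := by
  have hnil : IsAdmissible 0 [] := by simp [IsAdmissible]
  have h := hnil.foldl_phiStep hsort (fun x hx => (hrange x hx).1) (fun x hx => (hrange x hx).2)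
    L.zero_le
  exact fun s hs => (h s hs).2
end
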